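/- Fix integers d_1 ≥ d_2 ≥ … ≥ d_n ≥ 0 with d_{n+1} := 0, and let Q := { z ∈ ℝ^n : 0 ≤ z_i − z_{i+1} ≤ d_i − d_{i+1} for 1 ≤ i ≤ n, where z_{n+1} := 0 }. For any two half-integral points z, z' ∈ Q (all components in (1/2)ℤ), both [(z+z')/2]_1 and [(z+z')/2]_{1/2} are half-integral points of Q. -/
import Mathlib

/-- `u` is a half-integer. -/
def IsHalfInt (u : ℝ) : Prop := ∃ z : ℤ, u = z / 2

/-- `u` is a quarter-integer. -/
def IsQuarterInt (u : ℝ) : Prop := ∃ z : ℤ, u = z / 4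

open Classical in
/-- `[u]_1`: `u` itself if `u` is a half-integer, otherwise the integer nearest to `u`. -/
noncomputable def roundOne (u : ℝ) : ℝ := if IsHalfInt u then u else (round u : ℝ)

open Classical in
/-- `[u]_{1/2}`: `u` itself if `u` is a half-integer, otherwise the non-integral
half-integer nearest to `u`. -/
noncomputable def roundHalf (u : ℝ) : ℝ :=
  if IsHalfInt u then u else (round (u - 1 / 2) : ℝ) + 1 / 2

/-- The polytope `Q = { z : 0 ≤ z_i − z_{i+1} ≤ d_i − d_{i+1} (1 ≤ i ≤ n) }`,
where `z_{n+1} := 0`; points of `ℝ^n` are encoded as functions `ℕ → ℝ` with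
coordinates `z 1, …, z n` and the convention `z (n+1) = 0`. -/
def Qset (n : ℕ) (d : ℕ → ℤ) : Set (ℕ → ℝ) :=
  {z | z (n + 1) = 0 ∧ ∀ i, 1 ≤ i → i ≤ n →
      0 ≤ z i - z (i + 1) ∧ z i - z (i + 1) ≤ (d i : ℝ) - (d (i + 1) : ℝ)}

lemma roundOne_quarter (k : ℤ) :
    roundOne ((k : ℝ)/4) = ((k/2 + k % 4/3 : ℤ) : ℝ)/2 := by
  rcases Int.even_or_odd k with ⟨j, hj⟩ | ⟨j, hj⟩
  · have h : IsHalfInt ((k:ℝ)/4) := ⟨j, by subst hj; push_cast; ring⟩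
    rw [roundOne, if_pos h]
    have h2 : (k/2 + k % 4/3 : ℤ) = j := by omega
    rw [h2]; subst hj; push_cast; ring
  · have h : ¬ IsHalfInt ((k:ℝ)/4) := by
      rintro ⟨m, hm⟩
      have h1 : (k:ℝ) = 2*m := by linarith
      have h2 : k = 2*m := by exact_mod_cast h1
      omega
    rw [roundOne, if_neg h]
    have hr : round ((k:ℝ)/4) = (k+2)/4 := by
      rw [round_eq, Int.floor_eq_iff]
      constructor
      · have h5 : (4:ℝ) * ((k+2)/4 : ℤ) ≤ ((k:ℝ)+2) := by
          have : 4 * ((k+2)/4) ≤ k + 2 := by omega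
          exact_mod_cast this
        linarith
      · have h5 : ((k:ℝ)+2) < 4 * (((k+2)/4 : ℤ) + 1) := by
          have : k + 2 < 4 * ((k+2)/4 + 1) := by omega
          exact_mod_cast this
        linarith
    rw [hr]
    have h3 : (k/2 + k % 4/3 : ℤ) = 2 * ((k+2)/4) := by
      rcases (by omega : k % 4 = 1 ∨ k % 4 = 3) with h4 | h4 <;> omega
    rw [h3]
    push_cast
    ring

lemma roundHalf_quarter (k : ℤ) :
    roundHalf ((k : ℝ)/4) = ((k/2 + k % 4 % 2 - k % 4/3 : ℤ) : ℝ)/2 := by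
  rcases Int.even_or_odd k with ⟨j, hj⟩ | ⟨j, hj⟩
  · have h : IsHalfInt ((k:ℝ)/4) := ⟨j, by subst hj; push_cast; ring⟩
    rw [roundHalf, if_pos h]
    have h2 : (k/2 + k % 4 % 2 - k % 4/3 : ℤ) = j := by
      rcases (by omega : k % 4 = 0 ∨ k % 4 = 2) with h4 | h4 <;> omega
    rw [h2]; subst hj; push_cast; ring
  · have h : ¬ IsHalfInt ((k:ℝ)/4) := by
      rintro ⟨m, hm⟩
      have h1 : (k:ℝ) = 2*m := by linarith
      have h2 : k = 2*m := by exact_mod_cast h1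
      omega
    rw [roundHalf, if_neg h]
    have hr : round ((k:ℝ)/4 - 1/2) = k/4 := by
      rw [round_eq, Int.floor_eq_iff]
      constructor
      · have h5 : (4:ℝ) * ((k/4 : ℤ)) ≤ (k:ℝ) := by
          have : 4 * (k/4) ≤ k := by omega
          exact_mod_cast this
        linarith
      · have h5 : (k:ℝ) < 4 * ((k/4 : ℤ) + 1) := by
          have : k < 4 * (k/4 + 1) := by omega
          exact_mod_cast this
        linarith
    rw [hr]
    have h3 : (k/2 + k % 4 % 2 - k % 4/3 : ℤ) = 2 * (k/4) + 1 := by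
      rcases (by omega : k % 4 = 1 ∨ k % 4 = 3) with h4 | h4 <;> omega
    rw [h3]
    push_cast
    ring

lemma key_ineq (k k' D : ℤ) (h0 : 0 ≤ k - k') (h1 : k - k' ≤ 4*D) :
    (0 ≤ (k/2 + k % 4/3) - (k'/2 + k' % 4/3) ∧
      (k/2 + k % 4/3) - (k'/2 + k' % 4/3) ≤ 2*D) ∧
    (0 ≤ (k/2 + k % 4 % 2 - k % 4/3) - (k'/2 + k' % 4 % 2 - k' % 4/3) ∧
      (k/2 + k % 4 % 2 - k % 4/3) - (k'/2 + k' % 4 % 2 - k' % 4/3) ≤ 2*D) := by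
  rcases (by omega : k % 4 = 0 ∨ k % 4 = 1 ∨ k % 4 = 2 ∨ k % 4 = 3) with h|h|h|h <;>
  rcases (by omega : k' % 4 = 0 ∨ k' % 4 = 1 ∨ k' % 4 = 2 ∨ k' % 4 = 3) with h'|h'|h'|h' <;>
  omega

lemma half_diff_bounds (A B D : ℤ) (h1 : B ≤ A) (h2 : A - B ≤ 2*D) :
    0 ≤ (A:ℝ)/2 - (B:ℝ)/2 ∧ (A:ℝ)/2 - (B:ℝ)/2 ≤ (D:ℝ) := by
  have c1 : (B:ℝ) ≤ (A:ℝ) := by exact_mod_cast h1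
  have c2 : (A:ℝ) - (B:ℝ) ≤ 2*(D:ℝ) := by exact_mod_cast h2
  constructor <;> linarith

/-- Lemma 2.18.  Fix integers `d_1 ≥ d_2 ≥ … ≥ d_n ≥ 0` with
`d_{n+1} := 0` and let `Q` be the associated polytope.  For any two half-integral
points `z, z' ∈ Q`, both `[(z+z')/2]_1` and `[(z+z')/2]_{1/2}` are half-integral
points of `Q`. -/
theorem stmt10 (n : ℕ) (d : ℕ → ℤ)
    (hmono : ∀ i, 1 ≤ i → i < n → d (i + 1) ≤ d i)
    (hlast : 0 ≤ d n) (hend : d (n + 1) = 0)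
    (z z' : ℕ → ℝ) (hz : z ∈ Qset n d) (hz' : z' ∈ Qset n d)
    (hhz : ∀ i, 1 ≤ i → i ≤ n → IsHalfInt (z i))
    (hhz' : ∀ i, 1 ≤ i → i ≤ n → IsHalfInt (z' i)) :
    ((fun i => roundOne ((z i + z' i) / 2)) ∈ Qset n d ∧
      ∀ i, 1 ≤ i → i ≤ n → IsHalfInt (roundOne ((z i + z' i) / 2))) ∧
    ((fun i => roundHalf ((z i + z' i) / 2)) ∈ Qset n d ∧
      ∀ i, 1 ≤ i → i ≤ n → IsHalfInt (roundHalf ((z i + z' i) / 2))) := by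
  obtain ⟨hz0, hzc⟩ := hz
  obtain ⟨hz0', hzc'⟩ := hz'
  have hk : ∀ i, ∃ k : ℤ, 1 ≤ i → i ≤ n + 1 → (z i + z' i)/2 = (k:ℝ)/4 := by
    intro i
    rcases Nat.lt_or_ge i (n+1) with hlt | hge
    · rcases Nat.lt_or_ge i 1 with h1 | h1
      · exact ⟨0, by omega⟩
      obtain ⟨a, ha⟩ := hhz i h1 (by omega)
      obtain ⟨b, hb⟩ := hhz' i h1 (by omega)
      exact ⟨a + b, fun _ _ => by rw [ha, hb]; push_cast; ring⟩
    · refine ⟨0, fun _ h2 => ?_⟩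
      have : i = n + 1 := by omega
      rw [this, hz0, hz0']; norm_num
  choose K hK using hk
  have hbound : ∀ i, 1 ≤ i → i ≤ n →
      0 ≤ K i - K (i+1) ∧ K i - K (i+1) ≤ 4 * (d i - d (i+1)) := by
    intro i h1 h2
    obtain ⟨hl, hu⟩ := hzc i h1 h2
    obtain ⟨hl', hu'⟩ := hzc' i h1 h2
    have e1 := hK i h1 (by omega)
    have e2 := hK (i+1) (by omega) (by omega)
    have hdiff : (K i : ℝ)/4 - (K (i+1) : ℝ)/4
        = ((z i - z (i+1)) + (z' i - z' (i+1)))/2 := by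
      rw [← e1, ← e2]; ring
    have hr1 : (0:ℝ) ≤ (K i : ℝ) - K (i+1) := by linarith
    have hr2 : ((K i : ℝ) - K (i+1)) ≤ 4 * ((d i : ℝ) - d (i+1)) := by linarith
    constructor
    · exact_mod_cast hr1
    · exact_mod_cast hr2
  have hlast0 : (z (n+1) + z' (n+1))/2 = ((0:ℤ):ℝ)/4 := by
    rw [hz0, hz0']; norm_num
  refine ⟨⟨⟨?_, ?_⟩, ?_⟩, ⟨?_, ?_⟩, ?_⟩
  · show roundOne ((z (n+1) + z' (n+1))/2) = 0
    rw [hlast0, roundOne_quarter]; norm_num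
  · intro i h1 h2
    obtain ⟨hb1, hb2⟩ := hbound i h1 h2
    have e1 := hK i h1 (by omega)
    have e2 := hK (i+1) (by omega) (by omega)
    obtain ⟨⟨c1, c2⟩, _⟩ := key_ineq (K i) (K (i+1)) (d i - d (i+1)) hb1 hb2
    show (0:ℝ) ≤ roundOne ((z i + z' i)/2) - roundOne ((z (i+1) + z' (i+1))/2) ∧
      roundOne ((z i + z' i)/2) - roundOne ((z (i+1) + z' (i+1))/2) ≤ (d i : ℝ) - (d (i+1) : ℝ)
    rw [e1, e2, roundOne_quarter, roundOne_quarter]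
    obtain ⟨g1, g2⟩ := half_diff_bounds (K i/2 + K i % 4/3) (K (i+1)/2 + K (i+1) % 4/3)
      (d i - d (i+1)) (by omega) (by omega)
    refine ⟨g1, ?_⟩
    have : ((d i - d (i+1) : ℤ) : ℝ) = (d i : ℝ) - (d (i+1) : ℝ) := by push_cast; ring
    linarith [this ▸ g2]
  · intro i h1 h2
    rw [hK i h1 (by omega), roundOne_quarter]
    exact ⟨_, rfl⟩
  · show roundHalf ((z (n+1) + z' (n+1))/2) = 0
    rw [hlast0, roundHalf_quarter]; norm_num
  · intro i h1 h2
    obtain ⟨hb1, hb2⟩ := hbound i h1 h2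
    have e1 := hK i h1 (by omega)
    have e2 := hK (i+1) (by omega) (by omega)
    obtain ⟨_, c1, c2⟩ := key_ineq (K i) (K (i+1)) (d i - d (i+1)) hb1 hb2
    show (0:ℝ) ≤ roundHalf ((z i + z' i)/2) - roundHalf ((z (i+1) + z' (i+1))/2) ∧
      roundHalf ((z i + z' i)/2) - roundHalf ((z (i+1) + z' (i+1))/2) ≤ (d i : ℝ) - (d (i+1) : ℝ)
    rw [e1, e2, roundHalf_quarter, roundHalf_quarter]
    obtain ⟨g1, g2⟩ := half_diff_bounds
      (K i/2 + K i % 4 % 2 - K i % 4/3) (K (i+1)/2 + K (i+1) % 4 % 2 - K (i+1) % 4/3)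
      (d i - d (i+1)) (by omega) (by omega)
    refine ⟨g1, ?_⟩
    have : ((d i - d (i+1) : ℤ) : ℝ) = (d i : ℝ) - (d (i+1) : ℝ) := by push_cast; ring
    linarith [this ▸ g2]
  · intro i h1 h2
    rw [hK i h1 (by omega), roundHalf_quarter]
    exact ⟨_, rfl⟩
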